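/- arXiv:2402.15679 — 2 statements merged into one kernel-verified Lean document; each statement's English description precedes it below -/
import Mathlib

section
/- Let X ~ N(a√(2 ln D), 1 − a²) and Y ~ N(b√(2 ln D), 1 − b²) be independent, where −1 ≤ b < a ≤ 1 and D > 1. Then P(Y ≥ X) ≤ D^(−α²) where α = (a − b)/(√(1 − a²) + √(1 − b²)). -/
/-! `Y - X` is Gaussian with mean `-(a - b)√(2 ln D)` and variance `s = (1 - a²) + (1 - b²)`, so
the sub-Gaussian Chernoff bound gives `P(Y ≥ X) ≤ exp (-(a - b)² · 2 ln D / 2s) = D^(-(a - b)²/s)`.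
It remains to weaken `s` to `(√(1 - a²) + √(1 - b²))²`. -/

open MeasureTheory ProbabilityTheory Real
open scoped NNReal

namespace ProbabilityTheory

variable {Ω : Type*} {mΩ : MeasurableSpace Ω} {μ : Measure Ω} {X Y : Ω → ℝ}

lemma gaussianReal_sub_gaussianReal_of_indepFun {m₁ m₂ : ℝ} {v₁ v₂ : ℝ≥0}
    (hXY : IndepFun X Y μ) (hX : μ.map X = gaussianReal m₁ v₁)
    (hY : μ.map Y = gaussianReal m₂ v₂) :
    μ.map (X - Y) = gaussianReal (m₁ - m₂) (v₁ + v₂) := by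
  have hY_meas : AEMeasurable Y μ := aemeasurable_of_map_neZero (by rw [hY]; infer_instance)
  have hnegY : μ.map (-Y) = gaussianReal (-m₂) v₂ := (gaussianReal_neg ⟨hY_meas, hY⟩).map_eq
  rw [sub_eq_add_neg, gaussianReal_add_gaussianReal_of_indepFun hXY.neg_right hX hnegY,
    sub_eq_add_neg]

lemma hasSubgaussianMGF_of_map_eq_gaussianReal_zero {v : ℝ≥0}
    (hX : μ.map X = gaussianReal 0 v) : HasSubgaussianMGF X v μ := by
  have hX_meas : AEMeasurable X μ := aemeasurable_of_map_neZero (by rw [hX]; infer_instance)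
  refine (HasSubgaussianMGF.id_map_iff hX_meas).1 ?_
  rw [hX]
  exact ⟨integrable_exp_mul_gaussianReal, fun t ↦ by simp [mgf_id_gaussianReal]⟩

lemma measureReal_ge_le_of_map_eq_gaussianReal {m ε : ℝ} {v : ℝ≥0}
    (hX : μ.map X = gaussianReal m v) (hε : 0 ≤ ε) :
    μ.real {ω | m + ε ≤ X ω} ≤ exp (-ε ^ 2 / (2 * v)) := by
  have hX_meas : AEMeasurable X μ := aemeasurable_of_map_neZero (by rw [hX]; infer_instance)
  have hcentered : μ.map (fun ω ↦ X ω - m) = gaussianReal 0 v := by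
    simpa using (gaussianReal_sub_const ⟨hX_meas, hX⟩ m).map_eq
  simpa only [le_sub_iff_add_le'] using
    (hasSubgaussianMGF_of_map_eq_gaussianReal_zero hcentered).measure_ge_le hε

end ProbabilityTheory

lemma div_sqrt_add_sqrt_sq_le (x : ℝ) (u v : ℝ≥0) :
    (x / (NNReal.sqrt u + NNReal.sqrt v)) ^ 2 ≤ x ^ 2 / (u + v) := by
  rcases eq_or_ne (u + v) 0 with huv | huv
  · obtain ⟨rfl, rfl⟩ := add_eq_zero.1 huv
    simp
  have hsq : u + v ≤ (NNReal.sqrt u + NNReal.sqrt v) ^ 2 := by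
    rw [add_sq, NNReal.sq_sqrt, NNReal.sq_sqrt, add_right_comm]
    exact le_self_add
  rw [div_pow]
  exact div_le_div_of_nonneg_left (sq_nonneg x) (mod_cast pos_iff_ne_zero.2 huv)
    (mod_cast hsq)

theorem ceos_projection_compare_general
    {Ω : Type*} [MeasurableSpace Ω] (μ : Measure Ω) [IsProbabilityMeasure μ]
    (X Y : Ω → ℝ)
    (a b D : ℝ) (hba : b < a) (hD : 1 < D)
    (hX : μ.map X = gaussianReal (a * Real.sqrt (2 * Real.log D)) (Real.toNNReal (1 - a ^ 2)))
    (hY : μ.map Y = gaussianReal (b * Real.sqrt (2 * Real.log D)) (Real.toNNReal (1 - b ^ 2)))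
    (hInd : IndepFun X Y μ) :
    μ {ω | Y ω ≥ X ω} ≤
      ENNReal.ofReal
        (D ^ (-((a - b) / (Real.sqrt (1 - a ^ 2) + Real.sqrt (1 - b ^ 2))) ^ 2)) := by
  set L := √(2 * log D)
  set s : ℝ≥0 := (1 - a ^ 2).toNNReal + (1 - b ^ 2).toNNReal
  have hL_sq : L ^ 2 = 2 * log D := sq_sqrt (by linarith [log_pos hD])
  have hdiff : μ.map (Y - X) = gaussianReal (b * L - a * L) s :=
    (gaussianReal_sub_gaussianReal_of_indepFun hInd.symm hY hX).trans (by rw [add_comm])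
  have htail := measureReal_ge_le_of_map_eq_gaussianReal hdiff
    (ε := (a - b) * L) (mul_nonneg (sub_nonneg.2 hba.le) (sqrt_nonneg _))
  have hexp : exp (-((a - b) * L) ^ 2 / (2 * s)) = D ^ (-((a - b) ^ 2 / s)) := by
    rw [rpow_def_of_pos (by linarith), mul_pow, hL_sq]
    ring_nf
  have hset : {ω | Y ω ≥ X ω} = {ω | b * L - a * L + (a - b) * L ≤ (Y - X) ω} := by
    ext ω
    simp only [Set.mem_ofPred_eq, Pi.sub_apply]
    constructor <;> intro h <;> linarith
  rw [hset, ← ofReal_measureReal]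
  refine ENNReal.ofReal_le_ofReal (htail.trans (hexp.le.trans ?_))
  refine rpow_le_rpow_of_exponent_le hD.le (neg_le_neg ?_)
  -- `√x` unfolds to `NNReal.sqrt x.toNNReal`, the same truncation as in the variances.
  rw [Real.sqrt.eq_1, Real.sqrt.eq_1]
  exact div_sqrt_add_sqrt_sq_le _ _ _

/-- Equation (2) of the CEOs analysis: with `X ~ N(a√(2 ln D), 1 − a²)` and
`Y ~ N(b√(2 ln D), 1 − b²)` independent, `−1 ≤ b < a ≤ 1`, `D > 1`, we have
`P(Y ≥ X) ≤ D^(−α²)` where `α = (a − b)/(√(1 − a²) + √(1 − b²))`. -/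
theorem ceos_projection_compare
    {Ω : Type*} [MeasurableSpace Ω] (μ : Measure Ω) [IsProbabilityMeasure μ]
    (X Y : Ω → ℝ) (hXm : Measurable X) (hYm : Measurable Y)
    (a b D : ℝ) (hb : -1 ≤ b) (hba : b < a) (ha : a ≤ 1) (hD : 1 < D)
    (hX : μ.map X = gaussianReal (a * Real.sqrt (2 * Real.log D)) (Real.toNNReal (1 - a ^ 2)))
    (hY : μ.map Y = gaussianReal (b * Real.sqrt (2 * Real.log D)) (Real.toNNReal (1 - b ^ 2)))
    (hInd : IndepFun X Y μ) :
    μ {ω | Y ω ≥ X ω} ≤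
      ENNReal.ofReal
        (D ^ (-((a - b) / (Real.sqrt (1 - a ^ 2) + Real.sqrt (1 - b ^ 2))) ^ 2)) :=
  ceos_projection_compare_general μ X Y a b D hba hD hX hY hInd
end

section
/- Under the setting of the previous statement, if d' ≥ (2/δ²)·ln(2n²/γ), then for a fixed collection of n points x₁, …, x_n, with probability at least 1 − γ, simultaneously for all pairs (i, j), |f(x_i)ᵀf(x_j) − K(x_i, x_j)| < δ. -/
open MeasureTheory ProbabilityTheory Real
open scoped ENNReal NNReal

/-- Union bound over the `n²` pairs: if each pairwise kernel estimate `G i j` deviates from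
`K i j` by at least `δ` with probability at most `2·exp(−d'·δ²/2)`, and
`d' ≥ (2/δ²)·ln(2n²/γ)`, then with probability at least `1 − γ` all pairwise estimates are
within `δ` of the kernel values simultaneously. -/
theorem random_features_preserve_all_pairs
    {Ω : Type*} [MeasurableSpace Ω] (μ : Measure Ω) [IsProbabilityMeasure μ]
    (n d' : ℕ) (hn : 1 ≤ n) (G : Fin n → Fin n → Ω → ℝ)
    (hGm : ∀ i j, Measurable (G i j)) (K : Fin n → Fin n → ℝ)
    (δ γ : ℝ) (hδ : 0 < δ) (hγ : 0 < γ)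
    (hpair : ∀ i j, μ {ω | δ ≤ |G i j ω - K i j|} ≤
      ENNReal.ofReal (2 * Real.exp (-(d' : ℝ) * δ ^ 2 / 2)))
    (hd' : (2 / δ ^ 2) * Real.log (2 * (n : ℝ) ^ 2 / γ) ≤ (d' : ℝ)) :
    ENNReal.ofReal (1 - γ) ≤ μ {ω | ∀ i j, |G i j ω - K i j| < δ} := by
  have hn' : (0:ℝ) < (n:ℝ) := by exact_mod_cast hn
  have hn2 : (0:ℝ) < (n:ℝ)^2 := by positivity
  -- real bound: 2 * exp(-d' δ²/2) ≤ γ / n²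
  have hratio : (0:ℝ) < 2 * (n:ℝ)^2 / γ := by positivity
  have hlog : Real.log (2 * (n:ℝ)^2 / γ) ≤ (d':ℝ) * δ^2 / 2 := by
    have h2 : (0:ℝ) < δ^2 := by positivity
    have := mul_le_mul_of_nonneg_right hd' (le_of_lt h2)
    have h3 : (2 / δ ^ 2) * Real.log (2 * (n : ℝ) ^ 2 / γ) * δ^2
        = 2 * Real.log (2 * (n:ℝ)^2 / γ) := by
      field_simp
    nlinarith
  have hexp : Real.exp (-(d':ℝ) * δ^2 / 2) ≤ γ / (2 * (n:ℝ)^2) := by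
    have : Real.exp (-(d':ℝ) * δ^2 / 2) ≤ Real.exp (-(Real.log (2 * (n:ℝ)^2 / γ))) := by
      apply Real.exp_le_exp.mpr; linarith
    calc Real.exp (-(d':ℝ) * δ^2 / 2) ≤ Real.exp (-(Real.log (2 * (n:ℝ)^2 / γ))) := this
      _ = (2 * (n:ℝ)^2 / γ)⁻¹ := by
          rw [← Real.log_inv, Real.exp_log (by positivity)]
      _ = γ / (2 * (n:ℝ)^2) := by field_simp
  have hbound : 2 * Real.exp (-(d':ℝ) * δ^2 / 2) ≤ γ / (n:ℝ)^2 := by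
    have := mul_le_mul_of_nonneg_left hexp (by norm_num : (0:ℝ) ≤ 2)
    calc 2 * Real.exp (-(d':ℝ) * δ^2 / 2) ≤ 2 * (γ / (2 * (n:ℝ)^2)) := this
      _ = γ / (n:ℝ)^2 := by field_simp
  -- the bad set
  set B : Set Ω := ⋃ i : Fin n, ⋃ j : Fin n, {ω | δ ≤ |G i j ω - K i j|} with hB
  have hBmeas : MeasurableSet B := by
    apply MeasurableSet.iUnion; intro i; apply MeasurableSet.iUnion; intro j
    have : Measurable fun ω => |G i j ω - K i j| := ((hGm i j).sub measurable_const).abs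
    exact measurableSet_le measurable_const this
  have hμB : μ B ≤ ENNReal.ofReal γ := by
    calc μ B ≤ ∑ i : Fin n, μ (⋃ j : Fin n, {ω | δ ≤ |G i j ω - K i j|}) :=
          measure_iUnion_fintype_le μ _
      _ ≤ ∑ i : Fin n, ∑ j : Fin n, μ {ω | δ ≤ |G i j ω - K i j|} := by
          exact Finset.sum_le_sum fun i _ => measure_iUnion_fintype_le μ _
      _ ≤ ∑ _i : Fin n, ∑ _j : Fin n, ENNReal.ofReal (γ / (n:ℝ)^2) := by
          refine Finset.sum_le_sum fun i _ => Finset.sum_le_sum fun j _ => ?_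
          exact le_trans (hpair i j) (ENNReal.ofReal_le_ofReal hbound)
      _ = (n : ℝ≥0∞) * ((n : ℝ≥0∞) * ENNReal.ofReal (γ / (n:ℝ)^2)) := by
          simp [Finset.sum_const, nsmul_eq_mul, mul_assoc]
      _ = ENNReal.ofReal ((n:ℝ) * ((n:ℝ) * (γ / (n:ℝ)^2))) := by
          rw [ENNReal.ofReal_mul hn'.le, ENNReal.ofReal_mul hn'.le,
            ENNReal.ofReal_natCast]
      _ = ENNReal.ofReal γ := by congr 1; field_simp
  have hset : {ω | ∀ i j, |G i j ω - K i j| < δ} = Bᶜ := by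
    ext ω; simp [hB, not_le]
  rw [hset, measure_compl hBmeas (measure_ne_top μ B)]
  calc ENNReal.ofReal (1 - γ) = ENNReal.ofReal 1 - ENNReal.ofReal γ := by
        rw [ENNReal.ofReal_sub _ hγ.le]
    _ ≤ μ Set.univ - μ B := by
        rw [measure_univ, ENNReal.ofReal_one]
        exact tsub_le_tsub le_rfl hμB
end
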